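/- For every j ∈ {1,2} and every Q ≠ P in ℝ², the j-th column of H̃ is divergence-free in Q: ∑_{k=1}^{2} ∂H̃_{kj}(Q,P)/∂q_k = 0. -/

import Mathlib

/-!
In `ℝⁿ` the divergence of the `j`-th column of `H̃` works out to `(n - 2) R_j (8 log r - 10) / 32`,
so it vanishes exactly in the plane.
-/

open Real

/-- Partial derivative of a scalar function on ℝ² with respect to the `k`-th coordinate. -/
noncomputable def pd2 (f : EuclideanSpace ℝ (Fin 2) → ℝ) (k : Fin 2)
    (Q : EuclideanSpace ℝ (Fin 2)) : ℝ :=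
  fderiv ℝ f Q (EuclideanSpace.single k 1)

section InnerProductSpace

variable {F : Type*} [NormedAddCommGroup F] [InnerProductSpace ℝ F] {P x : F}

theorem hasFDerivAt_norm_sub_sq :
    HasFDerivAt (fun y => ‖y - P‖ ^ 2) (2 • innerSL ℝ (x - P)) x := by
  simpa using ((hasFDerivAt_id x).sub_const P).norm_sq

theorem hasFDerivAt_log_norm_sub (hx : x ≠ P) :
    HasFDerivAt (fun y => log ‖y - P‖) ((‖x - P‖ ^ 2)⁻¹ • innerSL ℝ (x - P)) x := by
  have hsq : ‖x - P‖ ^ 2 ≠ 0 := pow_ne_zero _ (norm_ne_zero_iff.2 (sub_ne_zero.2 hx))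
  have hlog : (fun y => log ‖y - P‖) = fun y => 1 / 2 * log (‖y - P‖ ^ 2) := by
    funext y
    rw [Real.log_pow]
    push_cast
    ring
  rw [hlog]
  refine (((hasFDerivAt_norm_sub_sq (P := P)).log hsq).const_mul (1 / 2)).congr_fderiv ?_
  ext v
  simp only [smul_apply, nsmul_eq_mul, smul_eq_mul]
  ring

end InnerProductSpace

section EuclideanSpace

variable {ι : Type*} [Fintype ι]

theorem hasFDerivAt_sub_apply (P x : EuclideanSpace ℝ ι) (i : ι) :
    HasFDerivAt (fun y : EuclideanSpace ℝ ι => (y - P) i)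
      (EuclideanSpace.proj i : EuclideanSpace ℝ ι →L[ℝ] ℝ) x :=
  ((EuclideanSpace.proj i : EuclideanSpace ℝ ι →L[ℝ] ℝ).hasFDerivAt (x := x)).sub_const (P i)

variable [DecidableEq ι]

noncomputable def hTilde (P : EuclideanSpace ℝ ι) (k j : ι) (Q : EuclideanSpace ℝ ι) : ℝ :=
  (1 / 32) * ((if k = j then (1 : ℝ) else 0) * ‖Q - P‖ ^ 2 * (17 - 12 * log ‖Q - P‖) +
    2 * (Q - P) k * (Q - P) j * (4 * log ‖Q - P‖ - 5))

theorem fderiv_hTilde_single {P Q : EuclideanSpace ℝ ι} (hQ : Q ≠ P) (k j i : ι) :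
    fderiv ℝ (hTilde P k j) Q (EuclideanSpace.single i 1) =
      (1 / 32) * ((if k = j then (Q - P) i * (22 - 24 * log ‖Q - P‖) else 0) +
        2 * ((if i = k then (Q - P) j else 0) + (if i = j then (Q - P) k else 0)) *
          (4 * log ‖Q - P‖ - 5) +
        8 * (Q - P) k * (Q - P) j * (Q - P) i / ‖Q - P‖ ^ 2) := by
  have hS := hasFDerivAt_norm_sub_sq (P := P) (x := Q)
  have hL := hasFDerivAt_log_norm_sub hQ
  have hk := hasFDerivAt_sub_apply P Q k
  have hj := hasFDerivAt_sub_apply P Q j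
  have hH : HasFDerivAt (hTilde P k j) _ Q :=
    (((hS.const_mul (if k = j then (1 : ℝ) else 0)).mul ((hL.const_mul 12).const_sub 17)).add
      (((hk.const_mul 2).mul hj).mul ((hL.const_mul 4).sub_const 5))).const_mul (1 / 32 : ℝ)
  rw [hH.fderiv]
  have hinner : innerSL ℝ (Q - P) (EuclideanSpace.single i 1) = (Q - P) i := by
    simp [EuclideanSpace.inner_single_right]
  have hproj (l : ι) :
      (EuclideanSpace.proj l : EuclideanSpace ℝ ι →L[ℝ] ℝ) (EuclideanSpace.single i 1) =
        if i = l then 1 else 0 := by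
    simp [PiLp.single_apply, eq_comm]
  have hr : ‖Q - P‖ ≠ 0 := norm_ne_zero_iff.2 (sub_ne_zero.2 hQ)
  simp only [_root_.add_apply, smul_apply, neg_apply, hinner, hproj, smul_eq_mul, nsmul_eq_mul,
    Pi.mul_apply]
  split_ifs <;> field_simp <;> ring

theorem sum_fderiv_hTilde_single {P Q : EuclideanSpace ℝ ι} (hQ : Q ≠ P) (j : ι) :
    ∑ k, fderiv ℝ (hTilde P k j) Q (EuclideanSpace.single k 1) =
      (Fintype.card ι - 2) * (Q - P) j * (8 * log ‖Q - P‖ - 10) / 32 := by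
  have hr : ‖Q - P‖ ≠ 0 := norm_ne_zero_iff.2 (sub_ne_zero.2 hQ)
  have hsum : ∑ k, (Q - P) k * (Q - P) k = ‖Q - P‖ ^ 2 := by
    simp only [EuclideanSpace.real_norm_sq_eq (Q - P), sq]
  have hterm (k : ι) : fderiv ℝ (hTilde P k j) Q (EuclideanSpace.single k 1) =
      (if k = j then (Q - P) j * (12 - 16 * log ‖Q - P‖) / 32 else 0) +
        (Q - P) j * (4 * log ‖Q - P‖ - 5) / 16 +
        (Q - P) j / (4 * ‖Q - P‖ ^ 2) * ((Q - P) k * (Q - P) k) := by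
    rw [fderiv_hTilde_single hQ]
    by_cases hkj : k = j
    · subst hkj
      simp only [if_true]
      field_simp
      ring
    · simp only [hkj, if_true, if_false]
      field_simp
      ring
  simp only [hterm, Finset.sum_add_distrib, Finset.sum_ite_eq', Finset.mem_univ, if_true,
    Finset.sum_const, Finset.card_univ, nsmul_eq_mul, ← Finset.mul_sum, hsum]
  field_simp
  ring

end EuclideanSpace

/-- Each column of the 2D H̃-function is divergence-free in Q:
∑_k ∂H̃_{kj}/∂q_k = 0 for Q ≠ P. -/
theorem twoD_H_column_divergence_free
    (P : EuclideanSpace ℝ (Fin 2))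
    (j : Fin 2) (Q : EuclideanSpace ℝ (Fin 2)) (hQ : Q ≠ P) :
    (∑ k : Fin 2,
        pd2 (fun Q'' =>
          (1 / 32) *
            ((if k = j then (1 : ℝ) else 0) * ‖Q'' - P‖ ^ 2 *
                (17 - 12 * Real.log ‖Q'' - P‖) +
              2 * (Q'' - P) k * (Q'' - P) j * (4 * Real.log ‖Q'' - P‖ - 5))) k Q) = 0 := by
  calc _ = ∑ k, fderiv ℝ (hTilde P k j) Q (EuclideanSpace.single k 1) := rfl
    _ = (Fintype.card (Fin 2) - 2) * (Q - P) j * (8 * log ‖Q - P‖ - 10) / 32 :=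
      sum_fderiv_hTilde_single hQ j
    _ = 0 := by simp
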